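/- Let Λ ∈ ℝ^{n×n} be symmetric positive semidefinite with all diagonal entries positive, fix an index m and a nonzero real p, and define λ_l = Λ_{m,l}·p for each l and normalized values λ_l^N = |λ_l|/sqrt(Λ_{l,l}). Then λ_m^N = max over l of λ_l^N. -/

import Mathlib

namespace Matrix.PosSemidef

variable {ι : Type*} {A : Matrix ι ι ℝ}

/-- The `2 × 2` principal minor on rows and columns `i, j` is nonnegative. -/
theorem mul_self_apply_le (hA : A.PosSemidef) (i j : ι) : A i j * A i j ≤ A i i * A j j := by
  have hminor := (hA.submatrix ![i, j]).det_nonneg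
  have hsymm : A j i = A i j := by simpa using hA.1.apply i j
  simp only [det_fin_two, submatrix_apply, Matrix.cons_val_zero, Matrix.cons_val_one] at hminor
  rw [hsymm] at hminor
  linarith

theorem abs_apply_le_sqrt_mul_sqrt (hA : A.PosSemidef) (i j : ι) :
    |A i j| ≤ √(A i i) * √(A j j) := by
  rw [← Real.sqrt_mul hA.diag_nonneg, ← Real.sqrt_mul_self_eq_abs]
  exact Real.sqrt_le_sqrt (hA.mul_self_apply_le i j)

theorem abs_apply_div_sqrt_le (hA : A.PosSemidef) (i j : ι) : |A i j| / √(A j j) ≤ √(A i i) :=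
  div_le_of_le_mul₀ (Real.sqrt_nonneg _) (Real.sqrt_nonneg _) (hA.abs_apply_le_sqrt_mul_sqrt i j)

theorem abs_apply_div_sqrt_self (hA : A.PosSemidef) (i : ι) : |A i i| / √(A i i) = √(A i i) := by
  rw [abs_of_nonneg hA.diag_nonneg, Real.div_sqrt]

end Matrix.PosSemidef

theorem stmt_11_general {n : ℕ} (Λ : Matrix (Fin n) (Fin n) ℝ)
    (hpsd : Λ.PosSemidef)
    (m : Fin n) (p : ℝ)
    (lam : Fin n → ℝ) (hlam : ∀ l, lam l = Λ m l * p)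
    (lamN : Fin n → ℝ) (hlamN : ∀ l, lamN l = |lam l| / Real.sqrt (Λ l l)) :
    IsGreatest (Set.range lamN) (lamN m) := by
  refine ⟨⟨m, rfl⟩, ?_⟩
  rintro _ ⟨l, rfl⟩
  rw [hlamN, hlamN, hlam, hlam, abs_mul, abs_mul, mul_div_right_comm, mul_div_right_comm,
    hpsd.abs_apply_div_sqrt_self]
  exact mul_le_mul_of_nonneg_right (hpsd.abs_apply_div_sqrt_le m l) (abs_nonneg p)

theorem stmt_11 {n : ℕ} (Λ : Matrix (Fin n) (Fin n) ℝ) (hsymm : Λ.IsSymm)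
    (hpsd : Λ.PosSemidef) (hdiag : ∀ l, 0 < Λ l l)
    (m : Fin n) (p : ℝ) (hp : p ≠ 0)
    (lam : Fin n → ℝ) (hlam : ∀ l, lam l = Λ m l * p)
    (lamN : Fin n → ℝ) (hlamN : ∀ l, lamN l = |lam l| / Real.sqrt (Λ l l)) :
    IsGreatest (Set.range lamN) (lamN m) :=
  stmt_11_general Λ hpsd m p lam hlam lamN hlamN
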